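/- arXiv:2602.05761 — 4 statements merged into one kernel-verified Lean document; each statement's English description precedes it below -/
import Mathlib

section
/- Let k be a field of characteristic 2, let S = k[x_{ij} : 1 ≤ i ≤ j ≤ n] be the polynomial ring in the entries of a generic symmetric n×n matrix (i.e., with x_{ji} identified with x_{ij} for i < j), and let f = det(x_{ij}) be the determinant of this symmetric matrix. Then f is congruent to the product x_{11}·x_{22}·⋯·x_{nn} of the diagonal entries modulo the ideal generated by all squares x_{ij}^2 of the variables. -/
/-!
In characteristic 2 signs disappear from the Leibniz expansion of the determinant, and for a
symmetric matrix the terms of `σ` and `σ⁻¹` coincide, so they cancel in pairs unless `σ` is an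
involution. An involution `σ ≠ 1` swaps some `i ≠ σ i`, so its term contains
`x_{i,σ i} * x_{σ i,i} = x_{i,σ i}^2`; only the identity term `∏ x_{ii}` survives.
-/

open MvPolynomial

open Finset in
theorem CharTwo.sum_eq_sum_filter_of_involutive {R ι : Type*} [Semiring R] [CharP R 2]
    [Fintype ι] [DecidableEq ι] {g : ι → ι} (hg : Function.Involutive g) {f : ι → R}
    (hf : ∀ a, f (g a) = f a) : ∑ a, f a = ∑ a with g a = a, f a := by
  suffices ∑ a with ¬g a = a, f a = 0 by
    rw [← sum_filter_add_sum_filter_not univ (fun a => g a = a), this, add_zero]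
  refine sum_involution (fun a _ => g a) (fun a _ => by rw [hf, add_self_eq_zero])
    (fun a ha _ => (mem_filter.1 ha).2) (fun a ha => ?_) (fun a _ => hg a)
  simp only [mem_filter, mem_univ, true_and, hg a] at ha ⊢
  exact Ne.symm ha

namespace Matrix

variable {n R : Type*} [Fintype n]

theorem det_eq_sum_prod_of_charTwo [DecidableEq n] [CommRing R] [CharP R 2] (A : Matrix n n R) :
    A.det = ∑ σ : Equiv.Perm n, ∏ i, A (σ i) i := by
  refine (det_apply' A).trans (Finset.sum_congr rfl fun σ _ => ?_)
  rcases Int.units_eq_one_or (Equiv.Perm.sign σ) with h | h <;> simp [h, CharTwo.neg_eq]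

theorem IsSymm.prod_perm_inv [CommMonoid R] {A : Matrix n n R} (hA : A.IsSymm)
    (σ : Equiv.Perm n) : ∏ i, A (σ⁻¹ i) i = ∏ i, A (σ i) i := by
  calc ∏ i, A (σ⁻¹ i) i = ∏ i, A i (σ i) := by
        simpa using (Equiv.prod_comp σ fun i => A (σ⁻¹ i) i).symm
    _ = ∏ i, A (σ i) i := Finset.prod_congr rfl fun i _ => hA.apply (σ i) i

theorem IsSymm.det_eq_sum_involutions_of_charTwo [DecidableEq n] [CommRing R] [CharP R 2]
    {A : Matrix n n R} (hA : A.IsSymm) :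
    A.det = ∑ σ : Equiv.Perm n with σ⁻¹ = σ, ∏ i, A (σ i) i := by
  rw [det_eq_sum_prod_of_charTwo]
  exact CharTwo.sum_eq_sum_filter_of_involutive inv_inv hA.prod_perm_inv

theorem IsSymm.sq_dvd_prod_of_inv_eq [DecidableEq n] [CommMonoid R] {A : Matrix n n R}
    (hA : A.IsSymm) {σ : Equiv.Perm n} (hσ : σ⁻¹ = σ) {i : n} (hi : σ i ≠ i) :
    A i (σ i) ^ 2 ∣ ∏ j, A (σ j) j := by
  have hσσ : σ (σ i) = i := (Equiv.Perm.inv_eq_iff_eq.1 (by rw [hσ])).symm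
  have hmem : σ i ∈ Finset.univ.erase i := Finset.mem_erase.2 ⟨hi, Finset.mem_univ _⟩
  rw [← Finset.mul_prod_erase _ _ (Finset.mem_univ i), ← Finset.mul_prod_erase _ _ hmem,
    ← mul_assoc, hσσ, hA.apply, sq]
  exact dvd_mul_right _ _

end Matrix

/-- In characteristic 2, the determinant of the generic symmetric `n × n` matrix is congruent
to the product of the diagonal variables modulo the ideal generated by the squares of all the
variables. The polynomial ring has variables `x_{ij}` for `i ≤ j`, and the `(i,j)`-entry of the
symmetric matrix is `x_{min(i,j), max(i,j)}`. -/
theorem stmt_0 (k : Type*) [Field k] [CharP k 2] (n : ℕ)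
    (M : Matrix (Fin n) (Fin n)
      (MvPolynomial {ij : Fin n × Fin n // ij.1 ≤ ij.2} k))
    (hM : ∀ i j, M i j = X ⟨(min i j, max i j), min_le_max⟩) :
    M.det - ∏ i : Fin n, X (⟨(i, i), le_rfl⟩ : {ij : Fin n × Fin n // ij.1 ≤ ij.2}) ∈
      Ideal.span (Set.range fun v : {ij : Fin n × Fin n // ij.1 ≤ ij.2} =>
        (X v : MvPolynomial {ij : Fin n × Fin n // ij.1 ≤ ij.2} k) ^ 2) := by
  have hsymm : M.IsSymm := Matrix.IsSymm.ext fun i j => by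
    simp only [hM, min_comm, max_comm]
  have hdiag : ∏ i : Fin n, X (⟨(i, i), le_rfl⟩ : {ij : Fin n × Fin n // ij.1 ≤ ij.2}) =
      ∏ i, M ((1 : Equiv.Perm (Fin n)) i) i := by
    simp [hM]
  have hone : (1 : Equiv.Perm (Fin n)) ∈ Finset.univ.filter fun σ => σ⁻¹ = σ := by simp
  rw [hsymm.det_eq_sum_involutions_of_charTwo, hdiag, ← Finset.add_sum_erase _ _ hone,
    add_sub_cancel_left]
  refine Ideal.sum_mem _ fun σ hσ => ?_
  obtain ⟨hσ1, hσ⟩ := Finset.mem_erase.1 hσ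
  obtain ⟨i, hi⟩ : ∃ i, σ i ≠ i := not_forall.1 fun h => hσ1 (Equiv.ext h)
  refine Ideal.mem_of_dvd _ (hsymm.sq_dvd_prod_of_inv_eq (Finset.mem_filter.1 hσ).2 hi) ?_
  rw [hM]
  exact Ideal.subset_span ⟨_, rfl⟩
end

section
/- Let k be a field of characteristic 2, S the polynomial ring in the entries of a generic symmetric n×n matrix with determinant f, and q = 2^s with s ≥ 1. Then the element g = f^{q/2 - 1} · x_{11}^{q/2} does not belong to the Frobenius power m^{[q]} = ⟨x_{ij}^q⟩: its expansion in the monomial basis contains the monomial x_{11}^{q-1} · x_{22}^{q/2-1} ⋯ x_{nn}^{q/2-1}, which is not divisible by any q-th power of a variable. -/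
/-!
Setting the off-diagonal variables to zero is an algebra endomorphism of `S` that does not change
the coefficient of any monomial in the diagonal variables, and it sends `f` to
`x₁₁ x₂₂ ⋯ xₙₙ`. So the coefficient of `x₁₁^(q-1) x₂₂^(q/2-1) ⋯ xₙₙ^(q/2-1)` in `g` equals its
coefficient in `(x₁₁ ⋯ xₙₙ)^(q/2-1) x₁₁^(q/2)`, which is `1`. A monomial all of whose exponents
are `< q` has coefficient `0` in every element of the monomial ideal `m^[q]`.
-/

open MvPolynomial

namespace MvPolynomial

variable {R σ : Type*} [CommSemiring R]

theorem coeff_aeval_ite_X_zero (P : σ → Prop) [DecidablePred P] {d : σ →₀ ℕ}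
    (hd : ∀ v ∈ d.support, P v) (p : MvPolynomial σ R) :
    coeff d (aeval (fun v => if P v then X v else 0) p) = coeff d p := by
  classical
  induction p using induction_on' with
  | add p q hp hq => rw [map_add, coeff_add, coeff_add, hp, hq]
  | monomial m c =>
    rw [aeval_monomial, algebraMap_eq]
    by_cases hm : ∀ v ∈ m.support, P v
    · rw [Finsupp.prod_congr fun v hv => by rw [if_pos (hm v hv)], ← monomial_eq]
    · obtain ⟨v, hv, hPv⟩ := not_forall₂.mp hm
      have hmd : m ≠ d := by rintro rfl; exact hPv (hd v hv)
      have hzero : (m.prod fun i k => (if P i then (X i : MvPolynomial σ R) else 0) ^ k) = 0 :=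
        Finset.prod_eq_zero hv <| by
          dsimp only
          rw [if_neg hPv, zero_pow (Finsupp.mem_support_iff.mp hv)]
      rw [hzero, mul_zero, coeff_zero, coeff_monomial, if_neg hmd]

theorem coeff_eq_zero_of_mem_span_X_pow {p : MvPolynomial σ R} {q : ℕ}
    (hp : p ∈ Ideal.span (Set.range fun v => (X v : MvPolynomial σ R) ^ q)) {d : σ →₀ ℕ}
    (hd : ∀ v, d v < q) : coeff d p = 0 := by
  have hgen : (Set.range fun v => (X v : MvPolynomial σ R) ^ q) =
      (fun m => monomial m 1) '' Set.range fun v => Finsupp.single v q := by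
    simp only [← Set.range_comp, Function.comp_def, X_pow_eq_monomial]
  rw [hgen, mem_ideal_span_monomial_image] at hp
  by_contra hne
  obtain ⟨_, ⟨v, rfl⟩, hle⟩ := hp d (mem_support_iff.mpr hne)
  exact (hd v).not_ge (by simpa using hle v)

theorem prod_X_pow_eq_monomial_sum {ι : Type*} (t : Finset ι) (e : ι → σ) (c : ι → ℕ) :
    ∏ i ∈ t, (X (e i) : MvPolynomial σ R) ^ c i =
      monomial (∑ i ∈ t, Finsupp.single (e i) (c i)) 1 := by
  simp only [monomial_sum_one, X_pow_eq_monomial]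

end MvPolynomial

theorem Finsupp.sum_single_apply_lt {ι σ : Type*} [Fintype ι] {e : ι → σ}
    (he : Function.Injective e) {c : ι → ℕ} {q : ℕ} (hq : 0 < q) (hc : ∀ i, c i < q) (v : σ) :
    (∑ i, Finsupp.single (e i) (c i)) v < q := by
  classical
  rw [Finsupp.finsetSum_apply]
  by_cases hv : v ∈ Set.range e
  · obtain ⟨j, rfl⟩ := hv
    simpa [Finsupp.single_apply, he.eq_iff] using hc j
  · simpa [Finsupp.single_apply, show ∀ i, e i ≠ v from fun i h => hv ⟨i, h⟩] using hq

abbrev SymIndex (n : ℕ) := {ij : Fin n × Fin n // ij.1 ≤ ij.2}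

namespace SymIndex

variable {n : ℕ}

def diag (i : Fin n) : SymIndex n := ⟨(i, i), le_rfl⟩

theorem diag_injective : Function.Injective (diag (n := n)) :=
  fun _ _ h => congrArg (fun v : SymIndex n => v.1.1) h

noncomputable def killOffDiag (R : Type*) [CommSemiring R] :
    MvPolynomial (SymIndex n) R →ₐ[R] MvPolynomial (SymIndex n) R :=
  aeval fun v => if v.1.1 = v.1.2 then X v else 0

variable {R : Type*} [CommRing R] {M : Matrix (Fin n) (Fin n) (MvPolynomial (SymIndex n) R)}

theorem map_killOffDiag (hM : ∀ i j, M i j = X ⟨(min i j, max i j), min_le_max⟩) :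
    M.map (killOffDiag R) = Matrix.diagonal fun i => X (diag i) := by
  ext i j
  rw [Matrix.map_apply, hM, killOffDiag, aeval_X]
  rcases eq_or_ne i j with rfl | hij
  · simp [diag]
  · rw [if_neg (min_lt_max.mpr hij).ne, Matrix.diagonal_apply_ne _ hij]

theorem killOffDiag_det (hM : ∀ i j, M i j = X ⟨(min i j, max i j), min_le_max⟩) :
    killOffDiag R M.det = ∏ i, X (diag i) := by
  rw [AlgHom.map_det, AlgHom.mapMatrix_apply, map_killOffDiag hM, Matrix.det_diagonal]

theorem coeff_det_pow_mul_X_diag_pow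
    (hM : ∀ i j, M i j = X ⟨(min i j, max i j), min_le_max⟩) (a b : ℕ) (i₀ : Fin n) :
    coeff (∑ i, Finsupp.single (diag i) (a + if i = i₀ then b else 0))
      (M.det ^ a * X (diag i₀) ^ b) = 1 := by
  have hdiag : ∀ v ∈ (∑ i, Finsupp.single (diag i) (a + if i = i₀ then b else 0)).support,
      v.1.1 = v.1.2 := by
    intro v hv
    obtain ⟨i, -, hi⟩ := Finset.mem_biUnion.mp (Finsupp.support_finsetSum hv)
    rw [Finset.mem_singleton.mp (Finsupp.support_single_subset hi)]
    rfl
  have hprod : (∏ i, X (diag i)) ^ a * X (diag i₀) ^ b =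
      ∏ i, (X (diag i) : MvPolynomial (SymIndex n) R) ^ (a + if i = i₀ then b else 0) := by
    simp only [pow_add, Finset.prod_mul_distrib, Finset.prod_pow, pow_ite, pow_zero,
      Finset.prod_ite_eq', Finset.mem_univ, if_true]
  rw [← coeff_aeval_ite_X_zero _ hdiag, ← killOffDiag, map_mul, map_pow, map_pow,
    killOffDiag_det hM, killOffDiag, aeval_X,
    if_pos (show (diag i₀).1.1 = (diag i₀).1.2 from rfl), hprod, prod_X_pow_eq_monomial_sum,
    coeff_monomial, if_pos rfl]

end SymIndex

open SymIndex in
theorem stmt_3_general (k : Type*) [Field k] (n : ℕ) (hn : 0 < n) (s : ℕ) (hs : 1 ≤ s)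
    (M : Matrix (Fin n) (Fin n)
      (MvPolynomial {ij : Fin n × Fin n // ij.1 ≤ ij.2} k))
    (hM : ∀ i j, M i j = X ⟨(min i j, max i j), min_le_max⟩) :
    MvPolynomial.coeff
        (∑ i : Fin n, Finsupp.single (⟨(i, i), le_rfl⟩ : {ij : Fin n × Fin n // ij.1 ≤ ij.2})
          (if (i : ℕ) = 0 then 2 ^ s - 1 else 2 ^ (s - 1) - 1))
        (M.det ^ (2 ^ (s - 1) - 1) *
          X (⟨(⟨0, hn⟩, ⟨0, hn⟩), le_rfl⟩ : {ij : Fin n × Fin n // ij.1 ≤ ij.2}) ^ 2 ^ (s - 1))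
      ≠ 0 ∧
    M.det ^ (2 ^ (s - 1) - 1) *
        X (⟨(⟨0, hn⟩, ⟨0, hn⟩), le_rfl⟩ : {ij : Fin n × Fin n // ij.1 ≤ ij.2}) ^ 2 ^ (s - 1) ∉
      Ideal.span (Set.range fun v : {ij : Fin n × Fin n // ij.1 ≤ ij.2} =>
        (X v : MvPolynomial {ij : Fin n × Fin n // ij.1 ≤ ij.2} k) ^ 2 ^ s) := by
  have hq : 2 ^ s = 2 ^ (s - 1) + 2 ^ (s - 1) := by
    rw [← two_mul, ← pow_succ', Nat.sub_add_cancel hs]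
  have hhalf : 0 < 2 ^ (s - 1) := by positivity
  have hexp : ∀ i : Fin n, (if (i : ℕ) = 0 then 2 ^ s - 1 else 2 ^ (s - 1) - 1) =
      2 ^ (s - 1) - 1 + if i = ⟨0, hn⟩ then 2 ^ (s - 1) else 0 := by
    intro i
    simp only [Fin.ext_iff]
    split_ifs <;> omega
  have hcoeff : coeff
      (∑ i, Finsupp.single (diag i) (if (i : ℕ) = 0 then 2 ^ s - 1 else 2 ^ (s - 1) - 1))
      (M.det ^ (2 ^ (s - 1) - 1) * X (diag ⟨0, hn⟩) ^ 2 ^ (s - 1)) = 1 := by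
    simp only [hexp]
    exact coeff_det_pow_mul_X_diag_pow hM _ _ _
  refine ⟨ne_of_eq_of_ne hcoeff one_ne_zero,
    fun hmem => one_ne_zero (hcoeff.symm.trans (coeff_eq_zero_of_mem_span_X_pow hmem ?_))⟩
  exact Finsupp.sum_single_apply_lt diag_injective (by positivity) fun i => by split_ifs <;> omega

/-- In characteristic 2, with `f` the determinant of the generic symmetric `n × n` matrix and
`q = 2 ^ s`, `s ≥ 1`, the element `g = f ^ (q/2 - 1) * x_{11} ^ (q/2)` does not lie in the
Frobenius power `m^{[q]} = ⟨x_{ij} ^ q⟩`: its expansion contains the monomial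
`x_{11} ^ (q-1) * x_{22} ^ (q/2-1) * ⋯ * x_{nn} ^ (q/2-1)` with nonzero coefficient, whose
exponents are all `< q`. -/
theorem stmt_3 (k : Type*) [Field k] [CharP k 2] (n : ℕ) (hn : 0 < n) (s : ℕ) (hs : 1 ≤ s)
    (M : Matrix (Fin n) (Fin n)
      (MvPolynomial {ij : Fin n × Fin n // ij.1 ≤ ij.2} k))
    (hM : ∀ i j, M i j = X ⟨(min i j, max i j), min_le_max⟩) :
    MvPolynomial.coeff
        (∑ i : Fin n, Finsupp.single (⟨(i, i), le_rfl⟩ : {ij : Fin n × Fin n // ij.1 ≤ ij.2})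
          (if (i : ℕ) = 0 then 2 ^ s - 1 else 2 ^ (s - 1) - 1))
        (M.det ^ (2 ^ (s - 1) - 1) *
          X (⟨(⟨0, hn⟩, ⟨0, hn⟩), le_rfl⟩ : {ij : Fin n × Fin n // ij.1 ≤ ij.2}) ^ 2 ^ (s - 1))
      ≠ 0 ∧
    M.det ^ (2 ^ (s - 1) - 1) *
        X (⟨(⟨0, hn⟩, ⟨0, hn⟩), le_rfl⟩ : {ij : Fin n × Fin n // ij.1 ≤ ij.2}) ^ 2 ^ (s - 1) ∉
      Ideal.span (Set.range fun v : {ij : Fin n × Fin n // ij.1 ≤ ij.2} =>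
        (X v : MvPolynomial {ij : Fin n × Fin n // ij.1 ≤ ij.2} k) ^ 2 ^ s) :=
  stmt_3_general k n hn s hs M hM
end

section
/- Let S be a polynomial ring over a field of characteristic p > 0, f a homogeneous polynomial of degree e, q = p^s, and for t in the field let f_t be a family of homogeneous degree-e polynomials depending polynomially on t with f_t obtained from f by an invertible scaling of variables for t ≠ 0. If multiplication by f_1 as a map (S/m^{[q]})_{d−e} → (S/m^{[q]})_d is surjective, then multiplication by f_t is surjective for all t ≠ 0; consequently v_q(S/⟨f_t⟩) is independent of t for t ≠ 0 and satisfies v_q(S/⟨f_1⟩) ≤ v_q(S/⟨f_0⟩). -/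
/-!
For `t ≠ 0` the substitution `x_i ↦ t ^ w i • x_i` (with `w i = 1` exactly for the scaled
variables) is a graded automorphism preserving `m^{[q]}` and `m`, and it maps `f = f_1` to `f_t`;
this transports surjectivity of multiplication and the socle degree. At `t = 0` it maps `f` to its
`w`-weight-zero part `f₀`. Grading `S` by (total degree, `w`-weight), a bihomogeneous `h` of
degree `d` with `h ∈ m^{[q]} + (f₀)` can be written `h ≡ f₀ c = f c - (f - f₀) c`, where every
bihomogeneous piece of `(f - f₀) c` has strictly larger weight; downward induction on the weight
gives `m^d ⊆ m^{[q]} + (f₀) → m^d ⊆ m^{[q]} + (f)`, i.e. `v_q(S/⟨f_1⟩) ≤ v_q(S/⟨f_0⟩)`.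
-/

open MvPolynomial

/-- `v_q(S/J)`: the socle degree of `(S/J)/m^{[q]}`, i.e. `max {d : m^d ⊄ J}` for the ideal
`J ⊇ m^{[q]}` of `S = k[x_1,…,x_r]`. -/
noncomputable def vsoc (k : Type*) [Field k] (r : ℕ) (J : Ideal (MvPolynomial (Fin r) k)) : ℕ :=
  sSup {d | ¬ (Ideal.span (Set.range (X : Fin r → MvPolynomial (Fin r) k))) ^ d ≤ J}

open Finsupp

attribute [local instance] MvPolynomial.weightedGradedAlgebra

namespace MvPolynomial

section Graded

variable {σ R M : Type*} [CommSemiring R] [AddCommMonoid M] [DecidableEq M] {w : σ → M}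

lemma exists_finset_eq_weightedHomogeneousComponent_zero_add_sum (w : σ → M)
    (φ : MvPolynomial σ R) :
    ∃ s : Finset M, 0 ∉ s ∧
      φ = weightedHomogeneousComponent w 0 φ + ∑ j ∈ s, weightedHomogeneousComponent w j φ := by
  let T := (weightedHomogeneousComponent_finsupp (w := w) φ).toFinset
  refine ⟨T.erase 0, Finset.notMem_erase 0 T, ?_⟩
  conv_lhs => rw [← sum_weightedHomogeneousComponent w φ,
    finsum_eq_sum_of_support_subset _ (s := insert 0 (T.erase 0))
      fun j hj => Finset.insert_erase_subset 0 T ((Set.Finite.mem_toFinset _).mpr hj)]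
  exact Finset.sum_insert (Finset.notMem_erase 0 T)

lemma isHomogeneous_span_X_pow (w : σ → M) (q : ℕ) :
    (Ideal.span (Set.range fun i => (X i : MvPolynomial σ R) ^ q)).IsHomogeneous
      (weightedHomogeneousSubmodule R w) :=
  Ideal.homogeneous_span _ _ <| by
    rintro _ ⟨i, rfl⟩
    exact ⟨q • w i, (isWeightedHomogeneous_X R w i).pow q⟩

lemma isHomogeneous_idealOfVars (w : σ → M) :
    (idealOfVars σ R).IsHomogeneous (weightedHomogeneousSubmodule R w) := by
  simpa using isHomogeneous_span_X_pow (R := R) w 1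

variable [PartialOrder M] [CanonicallyOrderedAdd M]

lemma weightedHomogeneousComponent_mul_of_not_le {u : MvPolynomial σ R} {i m : M}
    (hu : u.IsWeightedHomogeneous w i) (him : ¬ i ≤ m) (a : MvPolynomial σ R) :
    weightedHomogeneousComponent w m (u * a) = 0 := by
  rw [← weightedDecomposition.decompose'_apply]
  exact DirectSum.coe_decompose_mul_of_left_mem_of_not_le _ hu him

lemma weightedHomogeneousComponent_mul_of_le [Sub M] [OrderedSub M] [AddLeftReflectLE M]
    {u : MvPolynomial σ R} {i m : M} (hu : u.IsWeightedHomogeneous w i) (him : i ≤ m)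
    (a : MvPolynomial σ R) :
    weightedHomogeneousComponent w m (u * a) = u * weightedHomogeneousComponent w (m - i) a := by
  rw [← weightedDecomposition.decompose'_apply, ← weightedDecomposition.decompose'_apply]
  exact DirectSum.coe_decompose_mul_of_left_mem_of_le _ hu him

end Graded

lemma exists_sub_weightedHomogeneousComponent_mul_mem {σ R M : Type*} [CommRing R]
    [AddCommMonoid M] [DecidableEq M] {w : σ → M} {I : Ideal (MvPolynomial σ R)}
    (hI : I.IsHomogeneous (weightedHomogeneousSubmodule R w)) {u h : MvPolynomial σ R} {m : M}
    (hh : h.IsWeightedHomogeneous w m) (hmem : h ∈ I ⊔ Ideal.span {u}) :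
    ∃ a, h - weightedHomogeneousComponent w m (u * a) ∈ I := by
  obtain ⟨y, hy, z, hz, hyz⟩ := Submodule.mem_sup.mp hmem
  obtain ⟨a, rfl⟩ := Ideal.mem_span_singleton'.mp hz
  refine ⟨a, ?_⟩
  rw [← hh.weightedHomogeneousComponent_same, ← hyz, map_add, mul_comm a u, add_sub_cancel_right]
  exact weightedHomogeneousComponent_mem_of_mem R w hI hy m

section Scaling

variable {σ R : Type*} [CommSemiring R] (w : σ → ℕ)

noncomputable def scaleVars (t : R) : MvPolynomial σ R →ₐ[R] MvPolynomial σ R :=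
  aeval fun i => t ^ w i • X i

lemma scaleVars_monomial (t : R) (s : σ →₀ ℕ) (c : R) :
    scaleVars w t (monomial s c) = monomial s (t ^ weight w s * c) := by
  have hX (i : σ) (n : ℕ) : scaleVars w t (X i ^ n) = C (t ^ (n * w i)) * X i ^ n := by
    rw [map_pow, scaleVars, aeval_X, smul_eq_C_mul, mul_pow, ← map_pow, ← pow_mul, mul_comm n]
  rw [monomial_eq, monomial_eq, map_mul, algHom_C, Finsupp.prod, map_prod,
    Finset.prod_congr rfl fun i _ => hX i (s i), Finset.prod_mul_distrib, ← map_prod,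
    Finset.prod_pow_eq_pow_sum, map_mul, weight_apply, Finsupp.sum]
  simp only [smul_eq_mul, algebraMap_eq]
  ring

lemma coeff_scaleVars (t : R) (s : σ →₀ ℕ) (φ : MvPolynomial σ R) :
    coeff s (scaleVars w t φ) = t ^ weight w s * coeff s φ := by
  classical
  induction φ using MvPolynomial.induction_on' with
  | monomial s' c =>
    rw [scaleVars_monomial, coeff_monomial, coeff_monomial]
    split_ifs with h <;> simp [h]
  | add p q hp hq => simp [hp, hq, mul_add]

lemma scaleVars_scaleVars (t u : R) (φ : MvPolynomial σ R) :
    scaleVars w t (scaleVars w u φ) = scaleVars w (t * u) φ := by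
  ext s
  simp only [coeff_scaleVars, mul_pow, mul_assoc]

@[simp]
lemma scaleVars_one (φ : MvPolynomial σ R) : scaleVars w 1 φ = φ := by
  ext s
  simp [coeff_scaleVars]

lemma scaleVars_zero (φ : MvPolynomial σ R) :
    scaleVars w 0 φ = weightedHomogeneousComponent w 0 φ := by
  classical
  ext s
  rw [coeff_scaleVars, coeff_weightedHomogeneousComponent, zero_pow_eq, ite_mul, one_mul,
    zero_mul]

lemma weightedHomogeneousComponent_scaleVars (t : R) (n : ℕ) (φ : MvPolynomial σ R) :
    weightedHomogeneousComponent w n (scaleVars w t φ) =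
      t ^ n • weightedHomogeneousComponent w n φ := by
  classical
  ext s
  rw [coeff_smul, coeff_weightedHomogeneousComponent, coeff_weightedHomogeneousComponent,
    coeff_scaleVars]
  split_ifs with h <;> simp [h]

lemma IsWeightedHomogeneous.scaleVars {M : Type*} [AddCommMonoid M] {v : σ → M}
    {φ : MvPolynomial σ R} {m : M} (hφ : φ.IsWeightedHomogeneous v m) (t : R) :
    (scaleVars w t φ).IsWeightedHomogeneous v m := fun s hs =>
  hφ fun h => hs (by rw [coeff_scaleVars, h, mul_zero])

lemma scaleVars_mem {I : Ideal (MvPolynomial σ R)}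
    (hI : I.IsHomogeneous (weightedHomogeneousSubmodule R w)) (t : R) {φ : MvPolynomial σ R}
    (hφ : φ ∈ I) : scaleVars w t φ ∈ I := by
  rw [mem_iff_weightedHomogeneousComponent_mem R w hI]
  intro n
  rw [weightedHomogeneousComponent_scaleVars]
  exact Submodule.smul_of_tower_mem _ _ (weightedHomogeneousComponent_mem_of_mem R w hI hφ n)

noncomputable def scaleVarsEquiv (u : Rˣ) : MvPolynomial σ R ≃ₐ[R] MvPolynomial σ R :=
  AlgEquiv.ofAlgHom (scaleVars w u) (scaleVars w ↑u⁻¹)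
    (AlgHom.ext fun φ => by simp [scaleVars_scaleVars])
    (AlgHom.ext fun φ => by simp [scaleVars_scaleVars])

lemma map_scaleVarsEquiv {I : Ideal (MvPolynomial σ R)}
    (hI : I.IsHomogeneous (weightedHomogeneousSubmodule R w)) (u : Rˣ) :
    I.map (scaleVarsEquiv w u) = I := by
  refine le_antisymm (Ideal.map_le_iff_le_comap.mpr fun φ hφ => scaleVars_mem w hI _ hφ)
    fun φ hφ => ?_
  have : scaleVarsEquiv w u ((scaleVarsEquiv w u).symm φ) = φ := by simp
  rw [← this]
  exact Ideal.mem_map_of_mem _ (scaleVars_mem w hI _ hφ)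

lemma aeval_ite_smul_X_eq_scaleVars (ε : σ → Bool) (t : R) :
    aeval (fun i => if ε i then t • X i else X i) = scaleVars (fun i => (ε i).toNat) t := by
  rw [scaleVars]
  congr 1
  funext i
  cases ε i <;> simp

end Scaling

lemma exists_sub_scaleVars_mul_mem {σ R : Type*} [CommRing R] (w : σ → ℕ)
    {I : Ideal (MvPolynomial σ R)} (hI : I.IsHomogeneous (weightedHomogeneousSubmodule R w))
    {f : MvPolynomial σ R} {a b : ℕ}
    (hsurj : ∀ h : MvPolynomial σ R, h.IsHomogeneous b →
      ∃ g : MvPolynomial σ R, g.IsHomogeneous a ∧ h - f * g ∈ I)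
    (u : Rˣ) {h : MvPolynomial σ R} (hh : h.IsHomogeneous b) :
    ∃ g : MvPolynomial σ R, g.IsHomogeneous a ∧ h - scaleVars w (u : R) f * g ∈ I := by
  obtain ⟨g, hg, hmem⟩ := hsurj _ (IsWeightedHomogeneous.scaleVars w hh (u⁻¹ : Rˣ))
  refine ⟨scaleVars w (u : R) g, IsWeightedHomogeneous.scaleVars w hg _, ?_⟩
  have := scaleVars_mem w hI (u : R) hmem
  rwa [map_sub, map_mul, scaleVars_scaleVars, Units.mul_inv, scaleVars_one] at this

section Bigrading

variable {σ R : Type*} [CommSemiring R] {w : σ → ℕ}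

def bidegree (w : σ → ℕ) : σ → ℕ × ℕ := fun i => (1, w i)

lemma weight_bidegree (s : σ →₀ ℕ) : weight (bidegree w) s = (weight 1 s, weight w s) := by
  simp [weight_apply, Finsupp.sum, bidegree, Prod.ext_iff, Prod.fst_sum, Prod.snd_sum]

lemma isWeightedHomogeneous_bidegree_iff {φ : MvPolynomial σ R} {d n : ℕ} :
    φ.IsWeightedHomogeneous (bidegree w) (d, n) ↔
      φ.IsHomogeneous d ∧ φ.IsWeightedHomogeneous w n := by
  simp only [IsWeightedHomogeneous, IsHomogeneous, weight_bidegree, Prod.ext_iff]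
  exact ⟨fun h => ⟨fun s hs => (h hs).1, fun s hs => (h hs).2⟩, fun h s hs => ⟨h.1 hs, h.2 hs⟩⟩

lemma IsHomogeneous.mem_pow_idealOfVars {φ : MvPolynomial σ R} {d : ℕ}
    (hφ : φ.IsHomogeneous d) : φ ∈ idealOfVars σ R ^ d := by
  rw [mem_pow_idealOfVars_iff]
  intro s hs
  rw [degree_eq_weight_one]
  exact (hφ (mem_support_iff.mp hs)).ge

lemma IsHomogeneous.isWeightedHomogeneous_bidegree_weightedHomogeneousComponent
    {φ : MvPolynomial σ R} {d : ℕ} (hφ : φ.IsHomogeneous d) (n : ℕ) :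
    (weightedHomogeneousComponent w n φ).IsWeightedHomogeneous (bidegree w) (d, n) := by
  classical
  refine isWeightedHomogeneous_bidegree_iff.mpr
    ⟨fun s hs => hφ ?_, weightedHomogeneousComponent_isWeightedHomogeneous n φ⟩
  rw [coeff_weightedHomogeneousComponent] at hs
  exact fun h => hs (by simp [h])

lemma exists_forall_isWeightedHomogeneous_bidegree_eq_zero [Finite σ] (d : ℕ) :
    ∃ N, ∀ n > N, ∀ φ : MvPolynomial σ R,
      φ.IsWeightedHomogeneous (bidegree w) (d, n) → φ = 0 := by
  obtain ⟨N, hN⟩ := ((finite_of_degree_eq (σ := σ) d).image (weight w)).bddAbove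
  refine ⟨N, fun n hn φ hφ => ?_⟩
  ext s
  by_contra hs
  have hsw := hφ hs
  rw [weight_bidegree, Prod.ext_iff] at hsw
  have : weight w s ≤ N :=
    hN ⟨s, by rw [Set.mem_ofPred_eq, degree_eq_weight_one]; exact hsw.1, rfl⟩
  simp only at hsw
  omega

end Bigrading

section Degeneration

variable {σ R : Type*} [CommRing R] [Finite σ] {w : σ → ℕ} {I : Ideal (MvPolynomial σ R)}
  {f : MvPolynomial σ R} {e d : ℕ}

theorem mem_sup_span_of_isWeightedHomogeneous_bidegree
    (hI : I.IsHomogeneous (weightedHomogeneousSubmodule R (bidegree w))) (hf : f.IsHomogeneous e)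
    (h₀ : idealOfVars σ R ^ d ≤ I ⊔ Ideal.span {weightedHomogeneousComponent w 0 f}) (n : ℕ)
    {h : MvPolynomial σ R} (hh : h.IsWeightedHomogeneous (bidegree w) (d, n)) :
    h ∈ I ⊔ Ideal.span {f} := by
  induction n using Nat.strong_decreasing_induction generalizing h with
  | base =>
    obtain ⟨N, hN⟩ := exists_forall_isWeightedHomogeneous_bidegree_eq_zero (R := R) (w := w) d
    exact ⟨N, fun n hn h hh => hN n hn h hh ▸ zero_mem _⟩
  | step n ih =>
    have hf₀ := hf.isWeightedHomogeneous_bidegree_weightedHomogeneousComponent (w := w) 0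
    obtain ⟨a, ha⟩ := exists_sub_weightedHomogeneousComponent_mul_mem hI hh
      (h₀ (isWeightedHomogeneous_bidegree_iff.mp hh).1.mem_pow_idealOfVars)
    by_cases hed : e ≤ d
    · rw [weightedHomogeneousComponent_mul_of_le hf₀ (Prod.mk_le_mk.mpr ⟨hed, Nat.zero_le n⟩)]
        at ha
      set c := weightedHomogeneousComponent (bidegree w) ((d, n) - (e, 0)) a
      obtain ⟨s, hs0, hfs⟩ := exists_finset_eq_weightedHomogeneousComponent_zero_add_sum w f
      have hsplit : h = (h - weightedHomogeneousComponent w 0 f * c) + f * c -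
          ∑ j ∈ s, weightedHomogeneousComponent w j f * c := by
        nth_rw 2 [hfs]
        rw [add_mul, Finset.sum_mul]
        ring
      rw [hsplit]
      refine sub_mem (add_mem (Ideal.mem_sup_left ha)
        (Ideal.mem_sup_right (Ideal.mul_mem_right _ _ (Ideal.mem_span_singleton_self f))))
        (sum_mem fun j hj => ih (n + j) (by grind) ?_)
      have hprod := (hf.isWeightedHomogeneous_bidegree_weightedHomogeneousComponent j).mul
        (weightedHomogeneousComponent_isWeightedHomogeneous (w := bidegree w) ((d, n) - (e, 0)) a)
      convert hprod using 1
      ext <;> simp <;> omega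
    · rw [weightedHomogeneousComponent_mul_of_not_le hf₀ (by simpa using hed), sub_zero] at ha
      exact Ideal.mem_sup_left ha

theorem pow_idealOfVars_le_sup_span_of_le_sup_span_weightedHomogeneousComponent_zero
    (hI : I.IsHomogeneous (weightedHomogeneousSubmodule R (bidegree w))) (hf : f.IsHomogeneous e)
    (h₀ : idealOfVars σ R ^ d ≤ I ⊔ Ideal.span {weightedHomogeneousComponent w 0 f}) :
    idealOfVars σ R ^ d ≤ I ⊔ Ideal.span {f} := by
  rw [pow_idealOfVars_eq_span, Ideal.span_le]
  rintro _ ⟨s, hs, rfl⟩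
  refine mem_sup_span_of_isWeightedHomogeneous_bidegree hI hf h₀ (weight w s) ?_
  refine isWeightedHomogeneous_monomial _ _ _ ?_
  rw [weight_bidegree, ← hs, degree_eq_weight_one]
  rfl

end Degeneration

lemma pow_idealOfVars_le_span_X_pow {σ R : Type*} [CommSemiring R] [Fintype σ] (q : ℕ) :
    idealOfVars σ R ^ (Fintype.card σ * (q - 1) + 1) ≤
      Ideal.span (Set.range fun i => (X i : MvPolynomial σ R) ^ q) := by
  rw [pow_idealOfVars_eq_span, Ideal.span_le]
  rintro _ ⟨s, hs, rfl⟩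
  obtain ⟨i, hi⟩ : ∃ i, q ≤ s i := by
    by_contra! h
    have : degree s ≤ Fintype.card σ * (q - 1) := by
      rw [degree_eq_sum]
      calc ∑ i, s i ≤ ∑ _i : σ, (q - 1) := Finset.sum_le_sum fun i _ => Nat.le_pred_of_lt (h i)
        _ = _ := by simp
    simp only [Set.mem_preimage, Set.mem_singleton_iff] at hs
    omega
  have : monomial s (1 : R) = X i ^ q * monomial (s - single i q) 1 := by
    rw [X_pow_eq_monomial, monomial_mul, one_mul, add_tsub_cancel_of_le (single_le_iff.mpr hi)]
  change monomial s (1 : R) ∈ _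
  rw [this]
  exact Ideal.mul_mem_right _ _ (Ideal.subset_span ⟨i, rfl⟩)

lemma pow_idealOfVars_le_map_iff {σ R : Type*} [CommSemiring R]
    (φ : MvPolynomial σ R ≃ₐ[R] MvPolynomial σ R)
    (hφ : (idealOfVars σ R).map φ = idealOfVars σ R) (J : Ideal (MvPolynomial σ R)) (d : ℕ) :
    idealOfVars σ R ^ d ≤ J.map φ ↔ idealOfVars σ R ^ d ≤ J := by
  conv_lhs => rw [← hφ, ← Ideal.map_pow]
  rw [Ideal.map_le_iff_le_comap, Ideal.comap_map_of_bijective _ φ.bijective]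

end MvPolynomial

section SocleDegree

variable {k : Type*} [Field k] {r : ℕ}

lemma vsoc_map (φ : MvPolynomial (Fin r) k ≃ₐ[k] MvPolynomial (Fin r) k)
    (hφ : (idealOfVars (Fin r) k).map φ = idealOfVars (Fin r) k)
    (J : Ideal (MvPolynomial (Fin r) k)) :
    vsoc k r (J.map φ) = vsoc k r J := by
  change sSup {d | ¬ idealOfVars (Fin r) k ^ d ≤ J.map φ} =
    sSup {d | ¬ idealOfVars (Fin r) k ^ d ≤ J}
  simp_rw [pow_idealOfVars_le_map_iff φ hφ]

lemma vsoc_le_vsoc {J₁ J₂ : Ideal (MvPolynomial (Fin r) k)} {N : ℕ}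
    (hN : idealOfVars (Fin r) k ^ N ≤ J₂)
    (h : ∀ d, idealOfVars (Fin r) k ^ d ≤ J₂ → idealOfVars (Fin r) k ^ d ≤ J₁) :
    vsoc k r J₁ ≤ vsoc k r J₂ := by
  refine csSup_le_csSup' ⟨N, fun d hd => ?_⟩ fun d hd h₂ => hd (h d h₂)
  by_contra! hNd
  exact hd ((Ideal.pow_le_pow_right hNd.le).trans hN)

end SocleDegree

theorem stmt_16_general (k : Type*) [Field k] (p : ℕ) (r s e : ℕ)
    (f : MvPolynomial (Fin r) k) (hf : f.IsHomogeneous e)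
    (ε : Fin r → Bool)
    (F : k → MvPolynomial (Fin r) k)
    (hF : ∀ t : k, F t = aeval (fun i : Fin r =>
      if ε i then t • (X i : MvPolynomial (Fin r) k) else X i) f)
    (I : Ideal (MvPolynomial (Fin r) k))
    (hI : I = Ideal.span (Set.range fun i : Fin r => (X i : MvPolynomial (Fin r) k) ^ p ^ s)) :
    (∀ d : ℕ, e ≤ d →
      (∀ h : MvPolynomial (Fin r) k, h.IsHomogeneous d →
        ∃ g : MvPolynomial (Fin r) k, g.IsHomogeneous (d - e) ∧ h - F 1 * g ∈ I) →
      ∀ t : k, t ≠ 0 → ∀ h : MvPolynomial (Fin r) k, h.IsHomogeneous d →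
        ∃ g : MvPolynomial (Fin r) k, g.IsHomogeneous (d - e) ∧ h - F t * g ∈ I) ∧
    (∀ t : k, t ≠ 0 →
      vsoc k r (I ⊔ Ideal.span {F t}) = vsoc k r (I ⊔ Ideal.span {F 1})) ∧
    vsoc k r (I ⊔ Ideal.span {F 1}) ≤ vsoc k r (I ⊔ Ideal.span {F 0}) := by
  set w : Fin r → ℕ := fun i => (ε i).toNat
  have hFw (t : k) : F t = scaleVars w t f := by rw [hF, aeval_ite_smul_X_eq_scaleVars]
  have hF1 : F 1 = f := by rw [hFw, scaleVars_one]
  have hIw : I.IsHomogeneous (weightedHomogeneousSubmodule k w) := by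
    rw [hI]
    exact isHomogeneous_span_X_pow w _
  have hmap (t : k) (ht : t ≠ 0) :
      (I ⊔ Ideal.span {F 1}).map (scaleVarsEquiv w (Units.mk0 t ht)) = I ⊔ Ideal.span {F t} := by
    rw [Ideal.map_sup, map_scaleVarsEquiv w hIw, Ideal.map_span, Set.image_singleton, hF1, hFw]
    rfl
  refine ⟨fun d _ hsurj t ht h hh => ?_, fun t ht => ?_, ?_⟩
  · obtain ⟨g, hg, hmem⟩ := exists_sub_scaleVars_mul_mem w hIw hsurj (Units.mk0 t ht) hh
    rw [hF1] at hmem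
    exact ⟨g, hg, by rwa [hFw t]⟩
  · rw [← hmap t ht, vsoc_map _ (map_scaleVarsEquiv w (isHomogeneous_idealOfVars w) _)]
  · rw [hI]
    refine vsoc_le_vsoc (le_sup_left.trans' (pow_idealOfVars_le_span_X_pow (p ^ s))) fun d hd => ?_
    rw [hFw, scaleVars_zero] at hd
    rw [hF1]
    exact pow_idealOfVars_le_sup_span_of_le_sup_span_weightedHomogeneousComponent_zero
      (isHomogeneous_span_X_pow _ _) hf hd

/-- Semicontinuity under degeneration: let `f` be homogeneous of degree `e` and
`f_t = f(x(t))` the family obtained by scaling a chosen set of variables by `t` (an invertible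
scaling for `t ≠ 0`, depending polynomially on `t`). If multiplication by `f_1` is surjective
`(S/m^{[q]})_{d-e} → (S/m^{[q]})_d`, then so is multiplication by `f_t` for every `t ≠ 0`;
consequently `v_q(S/⟨f_t⟩)` is independent of `t ≠ 0` and `v_q(S/⟨f_1⟩) ≤ v_q(S/⟨f_0⟩)`. -/
theorem stmt_16 (k : Type*) [Field k] (p : ℕ) (hp : p.Prime) [CharP k p] (r s e : ℕ)
    (f : MvPolynomial (Fin r) k) (hf : f.IsHomogeneous e) (he : 0 < e)
    (ε : Fin r → Bool)
    (F : k → MvPolynomial (Fin r) k)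
    (hF : ∀ t : k, F t = aeval (fun i : Fin r =>
      if ε i then t • (X i : MvPolynomial (Fin r) k) else X i) f)
    (I : Ideal (MvPolynomial (Fin r) k))
    (hI : I = Ideal.span (Set.range fun i : Fin r => (X i : MvPolynomial (Fin r) k) ^ p ^ s)) :
    (∀ d : ℕ, e ≤ d →
      (∀ h : MvPolynomial (Fin r) k, h.IsHomogeneous d →
        ∃ g : MvPolynomial (Fin r) k, g.IsHomogeneous (d - e) ∧ h - F 1 * g ∈ I) →
      ∀ t : k, t ≠ 0 → ∀ h : MvPolynomial (Fin r) k, h.IsHomogeneous d →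
        ∃ g : MvPolynomial (Fin r) k, g.IsHomogeneous (d - e) ∧ h - F t * g ∈ I) ∧
    (∀ t : k, t ≠ 0 →
      vsoc k r (I ⊔ Ideal.span {F t}) = vsoc k r (I ⊔ Ideal.span {F 1})) ∧
    vsoc k r (I ⊔ Ideal.span {F 1}) ≤ vsoc k r (I ⊔ Ideal.span {F 0}) :=
  stmt_16_general k p r s e f hf ε F hF I hI
end

section
/- Let n ≥ 1 and q ≥ 2, and consider the monomial quotient ring A = k[y_{ij} : 1 ≤ i ≤ j ≤ n−1]/⟨y_{ij}^q⟩ over a field k of odd characteristic p with q = p^s. Let D = det(Y) where Y is the symmetric (n−1)×(n−1) matrix with entries y_{min(i,j),max(i,j)}. Then D^{(q+1)/2} is nonzero in A; that is, det(Y)^{(q+1)/2} ∉ ⟨y_{ij}^q : 1 ≤ i ≤ j ≤ n−1⟩. -/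
/-!
Setting every off-diagonal variable `y_ij` (`i < j`) to zero maps the ideal `⟨y_ij^q⟩` into
itself and turns `det Y` into `∏ y_ii`. So if `det(Y)^((q+1)/2)` were in the ideal, so would be
the monomial `∏ y_ii^((q+1)/2)`; but a monomial lies in `⟨y_ij^q⟩` only if one of its exponents
is at least `q`, and `(q+1)/2 < q` because `q ≥ 2`.
-/

open MvPolynomial

namespace MvPolynomial

variable {σ R : Type*} [CommSemiring R]

theorem monomial_one_notMem_span_X_pow [Nontrivial R] {q : ℕ} {d : σ →₀ ℕ} (hd : ∀ v, d v < q) :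
    monomial d (1 : R) ∉ Ideal.span (Set.range fun v => (X v : MvPolynomial σ R) ^ q) := by
  have hspan : (Set.range fun v => (X v : MvPolynomial σ R) ^ q) =
      (fun d => monomial d (1 : R)) '' Set.range fun v => Finsupp.single v q := by
    simp only [← Set.range_comp, Function.comp_def, X_pow_eq_monomial]
  rw [hspan, mem_ideal_span_monomial_image]
  intro h
  obtain ⟨_, ⟨v, rfl⟩, hle⟩ := h d (by classical simp [support_monomial])
  exact (hd v).not_ge (by simpa using hle v)

theorem prod_X_pow_notMem_span_X_pow [Nontrivial R] {ι : Type*} (s : Finset ι) {e : ι → σ}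
    (he : Function.Injective e) {m q : ℕ} (hmq : m < q) :
    ∏ i ∈ s, (X (e i) : MvPolynomial σ R) ^ m ∉
      Ideal.span (Set.range fun v => (X v : MvPolynomial σ R) ^ q) := by
  classical
  have hmono : ∏ i ∈ s, (X (e i) : MvPolynomial σ R) ^ m =
      monomial (∑ i ∈ s, Finsupp.single (e i) m) 1 := by
    rw [monomial_sum_one]
    exact Finset.prod_congr rfl fun i _ => X_pow_eq_monomial
  rw [hmono]
  refine monomial_one_notMem_span_X_pow fun v => hmq.trans_le' ?_
  have hcard : (s.filter (e · = v)).card ≤ 1 := Finset.card_le_one.mpr fun a ha b hb =>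
    he ((Finset.mem_filter.1 ha).2.trans (Finset.mem_filter.1 hb).2.symm)
  simp only [Finsupp.finsetSum_apply, Finsupp.single_apply]
  rw [Finset.sum_ite, Finset.sum_const_zero, add_zero, Finset.sum_const, smul_eq_mul]
  exact (Nat.mul_le_mul_right m hcard).trans_eq (one_mul m)

open Classical in
noncomputable def killOutside (S : Set σ) : MvPolynomial σ R →ₐ[R] MvPolynomial σ R :=
  aeval fun v => if v ∈ S then X v else 0

open Classical in
@[simp]
theorem killOutside_X (S : Set σ) (v : σ) :
    killOutside S (X v : MvPolynomial σ R) = if v ∈ S then X v else 0 :=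
  aeval_X _ _

theorem span_X_pow_le_comap_killOutside (S : Set σ) {q : ℕ} (hq : q ≠ 0) :
    Ideal.span (Set.range fun v => (X v : MvPolynomial σ R) ^ q) ≤
      (Ideal.span (Set.range fun v => (X v : MvPolynomial σ R) ^ q)).comap (killOutside S) := by
  classical
  refine Ideal.span_le.mpr ?_
  rintro _ ⟨v, rfl⟩
  simp only [SetLike.mem_coe, Ideal.mem_comap, map_pow, killOutside_X]
  split_ifs
  · exact Ideal.subset_span ⟨v, rfl⟩
  · simp [zero_pow hq]

end MvPolynomial

section SymmetricMatrix

variable {R ι : Type*} [CommRing R] [Fintype ι] [LinearOrder ι]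

theorem killOutside_diag_det_symm
    (Y : Matrix ι ι (MvPolynomial {ij : ι × ι // ij.1 ≤ ij.2} R))
    (hY : ∀ i j, Y i j = X ⟨(min i j, max i j), min_le_max⟩) :
    killOutside {v | v.1.1 = v.1.2} Y.det = ∏ i, (X ⟨(i, i), le_rfl⟩ : MvPolynomial _ R) := by
  rw [AlgHom.map_det, ← Matrix.det_diagonal]
  congr 1
  ext i j
  rw [AlgHom.mapMatrix_apply, Matrix.map_apply, hY, killOutside_X, Matrix.diagonal_apply]
  rcases eq_or_ne i j with rfl | hij
  · simp
  · simp [hij, (min_lt_max.2 hij).ne]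

end SymmetricMatrix

theorem stmt_17_general (k : Type*) [Field k] (p : ℕ) (hp : p.Prime)
    (n : ℕ) (s : ℕ) (hs : 1 ≤ s)
    (Y : Matrix (Fin (n - 1)) (Fin (n - 1))
      (MvPolynomial {ij : Fin (n - 1) × Fin (n - 1) // ij.1 ≤ ij.2} k))
    (hY : ∀ i j, Y i j = X ⟨(min i j, max i j), min_le_max⟩) :
    Y.det ^ ((p ^ s + 1) / 2) ∉
      Ideal.span (Set.range fun v : {ij : Fin (n - 1) × Fin (n - 1) // ij.1 ≤ ij.2} =>
        (X v : MvPolynomial {ij : Fin (n - 1) × Fin (n - 1) // ij.1 ≤ ij.2} k) ^ p ^ s) := by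
  have hq : 2 ≤ p ^ s := hp.two_le.trans (Nat.le_self_pow (by omega) p)
  intro hmem
  have hdiag := span_X_pow_le_comap_killOutside {v | v.1.1 = v.1.2} (by omega) hmem
  rw [Ideal.mem_comap, map_pow, killOutside_diag_det_symm Y hY, ← Finset.prod_pow] at hdiag
  have hinj : Function.Injective fun i : Fin (n - 1) =>
      (⟨(i, i), le_rfl⟩ : {ij : Fin (n - 1) × Fin (n - 1) // ij.1 ≤ ij.2}) :=
    fun i j h => congrArg (fun v => v.1.1) h
  exact prod_X_pow_notMem_span_X_pow _ hinj (by omega) hdiag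

/-- In odd characteristic `p`, with `q = p ^ s ≥ 2` and `Y` the generic symmetric
`(n-1) × (n-1)` matrix in the variables `y_{ij}` (`i ≤ j`), the power `det(Y)^((q+1)/2)` is
nonzero in `k[y_{ij}]/⟨y_{ij}^q⟩`; that is, `det(Y)^((q+1)/2) ∉ ⟨y_{ij}^q⟩`. -/
theorem stmt_17 (k : Type*) [Field k] (p : ℕ) (hp : p.Prime) (hodd : Odd p) [CharP k p]
    (n : ℕ) (hn : 1 ≤ n) (s : ℕ) (hs : 1 ≤ s)
    (Y : Matrix (Fin (n - 1)) (Fin (n - 1))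
      (MvPolynomial {ij : Fin (n - 1) × Fin (n - 1) // ij.1 ≤ ij.2} k))
    (hY : ∀ i j, Y i j = X ⟨(min i j, max i j), min_le_max⟩) :
    Y.det ^ ((p ^ s + 1) / 2) ∉
      Ideal.span (Set.range fun v : {ij : Fin (n - 1) × Fin (n - 1) // ij.1 ≤ ij.2} =>
        (X v : MvPolynomial {ij : Fin (n - 1) × Fin (n - 1) // ij.1 ≤ ij.2} k) ^ p ^ s) :=
  stmt_17_general k p hp n s hs Y hY
end
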